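/- arXiv:2505.11798 — 4 statements merged into one kernel-verified Lean document; each statement's English description precedes it below -/
import Mathlib

section
/- Let p > 1, W₀ > 0, γ > 0, c ∈ (0,1), and κ = (p-1)(1-c)γW₀^{p-1} > 0. Suppose W : [0,T) → ℝ is C¹ with W(0) = W₀, W(t) > 0, and W'(t) ≥ γ W₀^{(1-δ)(p-1)} exp(κ t) W(t)^{1+δ(p-1)} for all t ∈ [0,T), where δ ∈ (0,1). Then T < ∞; i.e., W cannot exist (remain finite) for all t ≥ 0. -/
/-!
Substituting `u = W ^ (-m)` with `m = δ (p - 1)` linearises the inequality: since the exponential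
factor is at least `1`, `u' ≤ -m γ W₀ ^ ((1 - δ)(p - 1))`, so the positive function `u` would have
to decrease linearly forever.
-/

open Real Set

lemma mul_neg_mul_rpow_neg_sub_one_le {A m w w' : ℝ} (hm : 0 ≤ m) (hw : 0 < w)
    (h : A * w ^ (1 + m) ≤ w') : w' * (-m) * w ^ (-m - 1) ≤ -(m * A) := by
  have hcancel : w ^ (1 + m) * w ^ (-m - 1) = 1 := by
    rw [← rpow_add hw, show 1 + m + (-m - 1) = 0 by ring, rpow_zero]
  have hA : A ≤ w' * w ^ (-m - 1) := by
    calc A = A * w ^ (1 + m) * w ^ (-m - 1) := by rw [mul_assoc, hcancel, mul_one]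
      _ ≤ w' * w ^ (-m - 1) := by gcongr
  nlinarith

section BlowUp

variable {W W' : ℝ → ℝ} {A m T : ℝ}

lemma antitoneOn_rpow_neg_add_mul_of_rpow_le_deriv (hm : 0 ≤ m)
    (hW : ∀ t ∈ Ico 0 T, HasDerivAt W (W' t) t) (hpos : ∀ t ∈ Ico 0 T, 0 < W t)
    (hineq : ∀ t ∈ Ico 0 T, A * W t ^ (1 + m) ≤ W' t) :
    AntitoneOn (fun t => W t ^ (-m) + m * A * t) (Ico 0 T) := by
  have hderiv : ∀ t ∈ Ico 0 T, HasDerivAt (fun t => W t ^ (-m) + m * A * t)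
      (W' t * (-m) * W t ^ (-m - 1) + m * A) t := fun t ht =>
    ((hW t ht).rpow_const (Or.inl (hpos t ht).ne')).add
      (((hasDerivAt_id' t).const_mul (m * A)).congr_deriv (mul_one _))
  refine antitoneOn_of_hasDerivWithinAt_nonpos (convex_Ico 0 T)
    (fun t ht => (hderiv t ht).continuousAt.continuousWithinAt)
    (fun t ht => (hderiv t (interior_subset ht)).hasDerivWithinAt) fun t ht => ?_
  have ht := interior_subset ht
  linarith [mul_neg_mul_rpow_neg_sub_one_le hm (hpos t ht) (hineq t ht)]

lemma le_rpow_neg_div_of_rpow_le_deriv (hm : 0 < m) (hA : 0 < A) (hT : 0 < T)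
    (hW : ∀ t ∈ Ico 0 T, HasDerivAt W (W' t) t) (hpos : ∀ t ∈ Ico 0 T, 0 < W t)
    (hineq : ∀ t ∈ Ico 0 T, A * W t ^ (1 + m) ≤ W' t) :
    T ≤ W 0 ^ (-m) / (m * A) := by
  have h0 : (0 : ℝ) ∈ Ico 0 T := ⟨le_rfl, hT⟩
  have := hpos 0 h0
  by_contra! hTt
  set t := W 0 ^ (-m) / (m * A)
  have ht : t ∈ Ico 0 T := ⟨by positivity, hTt⟩
  have hdecay := antitoneOn_rpow_neg_add_mul_of_rpow_le_deriv hm.le hW hpos hineq h0 ht ht.1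
  have hmAt : m * A * t = W 0 ^ (-m) := mul_div_cancel₀ _ (by positivity)
  have := rpow_pos_of_pos (hpos t ht) (-m)
  simp only [mul_zero, add_zero] at hdecay
  linarith

end BlowUp

theorem stmt1_general (p W₀ γ c δ : ℝ) (hp : 1 < p) (hW0 : 0 < W₀) (hγ : 0 < γ)
    (hc : c ∈ Set.Ioo (0:ℝ) 1) (hδ : δ ∈ Set.Ioo (0:ℝ) 1)
    (W W' : ℝ → ℝ)
    (hW : ∀ t ≥ (0:ℝ), HasDerivAt W (W' t) t)
    (hpos : ∀ t ≥ (0:ℝ), 0 < W t)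
    (hineq : ∀ t ≥ (0:ℝ),
      γ * W₀ ^ ((1 - δ) * (p - 1)) *
        Real.exp ((p - 1) * (1 - c) * γ * W₀ ^ (p - 1) * t) *
        W t ^ (1 + δ * (p - 1)) ≤ W' t) :
    False := by
  set m := δ * (p - 1)
  set A := γ * W₀ ^ ((1 - δ) * (p - 1))
  have hm : 0 < m := mul_pos hδ.1 (sub_pos.2 hp)
  have hA : 0 < A := by positivity
  have hκ : 0 ≤ (p - 1) * (1 - c) * γ * W₀ ^ (p - 1) := by
    have := sub_pos.2 hc.2
    have := sub_pos.2 hp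
    positivity
  have hsuper : ∀ t ≥ (0:ℝ), A * W t ^ (1 + m) ≤ W' t := fun t ht =>
    (mul_le_mul_of_nonneg_right (le_mul_of_one_le_right hA.le (one_le_exp (mul_nonneg hκ ht)))
      (rpow_pos_of_pos (hpos t ht) _).le).trans (hineq t ht)
  have := hpos 0 le_rfl
  have hT := le_rpow_neg_div_of_rpow_le_deriv (T := W 0 ^ (-m) / (m * A) + 1) hm hA
    (by positivity) (fun t ht => hW t ht.1) (fun t ht => hpos t ht.1) (fun t ht => hsuper t ht.1)
  linarith

/-- ODE blow-up: the superlinear differential inequality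
`W' ≥ γ W₀^{(1-δ)(p-1)} e^{κt} W^{1+δ(p-1)}` with
`κ = (p-1)(1-c)γ W₀^{p-1} > 0` cannot have a positive solution on all of `[0,∞)`. -/
theorem stmt1 (p W₀ γ c δ : ℝ) (hp : 1 < p) (hW0 : 0 < W₀) (hγ : 0 < γ)
    (hc : c ∈ Set.Ioo (0:ℝ) 1) (hδ : δ ∈ Set.Ioo (0:ℝ) 1)
    (W W' : ℝ → ℝ)
    (hW : ∀ t ≥ (0:ℝ), HasDerivAt W (W' t) t)
    (hW0' : W 0 = W₀) (hpos : ∀ t ≥ (0:ℝ), 0 < W t)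
    (hineq : ∀ t ≥ (0:ℝ),
      γ * W₀ ^ ((1 - δ) * (p - 1)) *
        Real.exp ((p - 1) * (1 - c) * γ * W₀ ^ (p - 1) * t) *
        W t ^ (1 + δ * (p - 1)) ≤ W' t) :
    False :=
  stmt1_general p W₀ γ c δ hp hW0 hγ hc hδ W W' hW hpos hineq
end

section
/- Let p > 1 and W₀ > 0. Suppose W : [0,T) → ℝ is C¹ with W(0) = W₀, W(t) > 0, and W'(t) ≥ (t+1)^{-1} W(t)^p for all t ∈ [0,T). Then T ≤ exp(C·W₀^{-(p-1)}) - 1 for some constant C > 0 depending only on p. -/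
/-!
The substitution `V = W^{1-p}` linearises the differential inequality: it becomes
`V' ≤ -(p-1)/(t+1)`, so `W^{1-p} + (p-1) log(t+1)` is nonincreasing. Since `W^{1-p} > 0`, this
gives `(p-1) log(t+1) < W₀^{1-p}` for every `t < T`.
-/

open Real Set

theorem antitoneOn_rpow_one_sub_add_mul_of_mul_rpow_le {D : Set ℝ} (hD : Convex ℝ D) {p : ℝ}
    (hp : 1 ≤ p) {W W' G g : ℝ → ℝ} (hW : ∀ t ∈ D, HasDerivAt W (W' t) t)
    (hG : ∀ t ∈ D, HasDerivAt G (g t) t) (hpos : ∀ t ∈ D, 0 < W t)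
    (hineq : ∀ t ∈ D, g t * W t ^ p ≤ W' t) :
    AntitoneOn (fun t ↦ W t ^ (1 - p) + (p - 1) * G t) D := by
  have hderiv : ∀ t ∈ D, HasDerivAt (fun t ↦ W t ^ (1 - p) + (p - 1) * G t)
      (W' t * (1 - p) * W t ^ (1 - p - 1) + (p - 1) * g t) t := fun t ht ↦
    ((hW t ht).rpow_const (Or.inl (hpos t ht).ne')).add ((hG t ht).const_mul (p - 1))
  refine antitoneOn_of_hasDerivWithinAt_nonpos hD
    (fun t ht ↦ (hderiv t ht).continuousAt.continuousWithinAt)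
    (fun t ht ↦ (hderiv t (interior_subset ht)).hasDerivWithinAt) fun t ht ↦ ?_
  replace ht := interior_subset ht
  have hWt := hpos t ht
  have hg_le : g t ≤ W t ^ (-p) * W' t :=
    calc g t = W t ^ (-p) * (g t * W t ^ p) := by
          rw [mul_left_comm, ← rpow_add hWt, neg_add_cancel, rpow_zero, mul_one]
      _ ≤ W t ^ (-p) * W' t := by gcongr; exact hineq t ht
  calc W' t * (1 - p) * W t ^ (1 - p - 1) + (p - 1) * g t
      = (1 - p) * (W t ^ (-p) * W' t - g t) := by rw [sub_sub_cancel_left]; ring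
    _ ≤ 0 := mul_nonpos_of_nonpos_of_nonneg (by linarith) (by linarith)

theorem add_one_lt_exp_of_mul_rpow_le {p T W₀ : ℝ} (hp : 1 < p) {W W' : ℝ → ℝ} (hW₀ : W 0 = W₀)
    (hW : ∀ t ∈ Ico 0 T, HasDerivAt W (W' t) t) (hpos : ∀ t ∈ Ico 0 T, 0 < W t)
    (hineq : ∀ t ∈ Ico 0 T, (t + 1)⁻¹ * W t ^ p ≤ W' t) {t : ℝ} (ht : t ∈ Ico 0 T) :
    t + 1 < exp ((p - 1)⁻¹ * W₀ ^ (-(p - 1))) := by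
  have hlog : ∀ s ∈ Ico 0 T, HasDerivAt (fun s ↦ log (s + 1)) (s + 1)⁻¹ s := fun s hs ↦ by
    simpa using ((hasDerivAt_id s).add_const 1).log (by linarith [hs.1] : (0:ℝ) < s + 1).ne'
  have hmono := antitoneOn_rpow_one_sub_add_mul_of_mul_rpow_le (convex_Ico 0 T) hp.le hW hlog
    hpos hineq (left_mem_Ico.2 (ht.1.trans_lt ht.2)) ht ht.1
  simp only [zero_add, log_one, mul_zero, add_zero, hW₀] at hmono
  have hlog_lt : log (t + 1) < (p - 1)⁻¹ * W₀ ^ (-(p - 1)) := by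
    rw [lt_inv_mul_iff₀ (by linarith), neg_sub]
    linarith [rpow_pos_of_pos (hpos t ht) (1 - p)]
  rwa [← exp_lt_exp, exp_log (by linarith [ht.1])] at hlog_lt

/-- ODE blow-up in the critical case: if `W' ≥ (t+1)^{-1} W^p`, `p > 1`, then
the lifespan satisfies `T ≤ exp(C W₀^{-(p-1)}) - 1` for a constant `C = C(p)`. -/
theorem stmt3 (p : ℝ) (hp : 1 < p) :
    ∃ C > 0, ∀ (W₀ T : ℝ) (W W' : ℝ → ℝ), 0 < W₀ → 0 < T →
      W 0 = W₀ →
      (∀ t ∈ Set.Ico (0:ℝ) T, HasDerivAt W (W' t) t) →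
      (∀ t ∈ Set.Ico (0:ℝ) T, 0 < W t) →
      (∀ t ∈ Set.Ico (0:ℝ) T, (t + 1)⁻¹ * W t ^ p ≤ W' t) →
      T ≤ Real.exp (C * W₀ ^ (-(p - 1))) - 1 := by
  refine ⟨(p - 1)⁻¹, inv_pos.2 (sub_pos.2 hp), fun W₀ T W W' hW₀pos _ hW₀ hW hpos hineq ↦ ?_⟩
  set B := exp ((p - 1)⁻¹ * W₀ ^ (-(p - 1))) - 1
  have hB : 0 < B := sub_pos.2 (one_lt_exp_iff.2 (by have := sub_pos.2 hp; positivity))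
  by_contra! hTB
  have := add_one_lt_exp_of_mul_rpow_le hp hW₀ hW hpos hineq ⟨hB.le, hTB⟩
  simp only [B, sub_add_cancel, lt_self_iff_false] at this
end

section
/- Let p > 1, W₀ > 0, γ > 0, and λ > 0. Suppose W : [0,T) → ℝ is C¹ with W(0) = W₀, W(t) > 0, and W'(t) ≥ γ W₀^{(1-δ)(p-1)} exp(λ t) W(t)^{1+δ(p-1)} for all t ∈ [0,T), with fixed δ ∈ (0,1). Then T ≤ C·ln(1 + W₀^{-(p-1)}) for a constant C depending only on p, γ, δ, λ. -/
open Real Set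

/-! For `σ = δ(p - 1)` and `c = γ W₀^{(1-δ)(p-1)}` the inequality reads `W' ≥ c e^{λt} W^{1+σ}`,
so `W^{-σ} + σ c e^{λt} / λ` is nonincreasing. As `W^{-σ} > 0`, this forces
`e^{λt} - 1 < λ W₀^{-σ} / (σ c) = (λ / (σ γ)) W₀^{-(p-1)}` on the whole lifespan.
Bernoulli's inequality `1 + K x ≤ (1 + x) ^ max K 1` then bounds `λ T` by `max K 1 · log (1 + x)`. -/

theorem antitoneOn_of_hasDerivAt_nonpos {D : Set ℝ} (hD : Convex ℝ D) {f f' : ℝ → ℝ}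
    (hf : ∀ x ∈ D, HasDerivAt f (f' x) x) (hf'₀ : ∀ x ∈ D, f' x ≤ 0) : AntitoneOn f D :=
  antitoneOn_of_hasDerivWithinAt_nonpos hD
    (fun x hx => (hf x hx).continuousAt.continuousWithinAt)
    (fun x hx => (hf x (interior_subset hx)).hasDerivWithinAt)
    fun x hx => hf'₀ x (interior_subset hx)

theorem log_one_add_mul_le_max_mul_log {K x : ℝ} (hK : 0 ≤ K) (hx : 0 ≤ x) :
    log (1 + K * x) ≤ max K 1 * log (1 + x) := by
  have hM : 1 ≤ max K 1 := le_max_right K 1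
  calc log (1 + K * x) ≤ log (1 + max K 1 * x) :=
        log_le_log (by positivity) (by gcongr; exact le_max_left K 1)
    _ ≤ log ((1 + x) ^ max K 1) :=
        log_le_log (by positivity) (one_add_mul_self_le_rpow_one_add (by linarith) hM)
    _ = max K 1 * log (1 + x) := log_rpow (by linarith) _

section Blowup

variable {σ c lam T : ℝ} {W W' : ℝ → ℝ}

theorem antitoneOn_rpow_neg_add_exp {D : Set ℝ} (hσ : 0 ≤ σ) (hlam : lam ≠ 0)
    (hD : Convex ℝ D) (hW : ∀ t ∈ D, HasDerivAt W (W' t) t) (hpos : ∀ t ∈ D, 0 < W t)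
    (hineq : ∀ t ∈ D, c * exp (lam * t) * W t ^ (1 + σ) ≤ W' t) :
    AntitoneOn (fun t => W t ^ (-σ) + σ * c * exp (lam * t) / lam) D := by
  refine antitoneOn_of_hasDerivAt_nonpos hD
    (f' := fun t => σ * (c * exp (lam * t) - W t ^ (-σ - 1) * W' t)) (fun t ht => ?_)
    fun t ht => ?_
  · have hpow := (hW t ht).rpow_const (p := -σ) (Or.inl (hpos t ht).ne')
    have hexp := (((hasDerivAt_id' t).const_mul lam).exp.const_mul (σ * c)).div_const lam
    refine (hpow.add hexp).congr_deriv ?_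
    field_simp
    ring
  · have hWt := hpos t ht
    have hcancel : W t ^ (-σ - 1) * W t ^ (1 + σ) = 1 := by
      rw [← rpow_add hWt, show -σ - 1 + (1 + σ) = 0 by ring, rpow_zero]
    have hcoef : c * exp (lam * t) ≤ W t ^ (-σ - 1) * W' t := by
      calc c * exp (lam * t) = W t ^ (-σ - 1) * (c * exp (lam * t) * W t ^ (1 + σ)) := by
            linear_combination (-(c * exp (lam * t))) * hcancel
        _ ≤ W t ^ (-σ - 1) * W' t := by gcongr; exact hineq t ht
    exact mul_nonpos_of_nonneg_of_nonpos hσ (by linarith)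

theorem exp_sub_one_lt_of_rpow_blowup (hσ : 0 ≤ σ) (hlam : lam ≠ 0)
    (hW : ∀ t ∈ Ico 0 T, HasDerivAt W (W' t) t) (hpos : ∀ t ∈ Ico 0 T, 0 < W t)
    (hineq : ∀ t ∈ Ico 0 T, c * exp (lam * t) * W t ^ (1 + σ) ≤ W' t)
    {t : ℝ} (ht : t ∈ Ico 0 T) :
    σ * c * (exp (lam * t) - 1) / lam < W 0 ^ (-σ) := by
  have h0 : (0 : ℝ) ∈ Ico 0 T := ⟨le_rfl, ht.1.trans_lt ht.2⟩
  have hanti := antitoneOn_rpow_neg_add_exp hσ hlam (convex_Ico 0 T) hW hpos hineq h0 ht ht.1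
  have hWt : 0 < W t ^ (-σ) := rpow_pos_of_pos (hpos t ht) _
  simp only [mul_zero, exp_zero, mul_one] at hanti
  rw [mul_sub, mul_one, sub_div]
  linarith

theorem le_log_div_of_rpow_blowup (hσ : 0 < σ) (hc : 0 < c) (hlam : 0 < lam) (hT : 0 < T)
    (hW : ∀ t ∈ Ico 0 T, HasDerivAt W (W' t) t) (hpos : ∀ t ∈ Ico 0 T, 0 < W t)
    (hineq : ∀ t ∈ Ico 0 T, c * exp (lam * t) * W t ^ (1 + σ) ≤ W' t) :
    T ≤ log (1 + lam * W 0 ^ (-σ) / (σ * c)) / lam := by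
  have hW0 : 0 < W 0 ^ (-σ) := rpow_pos_of_pos (hpos 0 ⟨le_rfl, hT⟩) _
  set L := log (1 + lam * W 0 ^ (-σ) / (σ * c))
  have hL : 0 ≤ L := log_nonneg (le_add_of_nonneg_right (by positivity))
  by_contra! hTL
  have hlt := exp_sub_one_lt_of_rpow_blowup hσ.le hlam.ne' hW hpos hineq
    ⟨div_nonneg hL hlam.le, hTL⟩
  rw [mul_div_cancel₀ L hlam.ne', exp_log (by positivity)] at hlt
  field_simp at hlt
  linarith

end Blowup

/-- ODE blow-up with exponentially growing coefficient of fixed rate `λ > 0`: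
the lifespan satisfies `T ≤ C ln(1 + W₀^{-(p-1)})` with `C = C(p, γ, δ, λ)`. -/
theorem stmt4 (p γ δ lam : ℝ) (hp : 1 < p) (hγ : 0 < γ) (hlam : 0 < lam)
    (hδ : δ ∈ Set.Ioo (0:ℝ) 1) :
    ∃ C > 0, ∀ (W₀ T : ℝ) (W W' : ℝ → ℝ), 0 < W₀ → 0 < T →
      W 0 = W₀ →
      (∀ t ∈ Set.Ico (0:ℝ) T, HasDerivAt W (W' t) t) →
      (∀ t ∈ Set.Ico (0:ℝ) T, 0 < W t) →
      (∀ t ∈ Set.Ico (0:ℝ) T,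
        γ * W₀ ^ ((1 - δ) * (p - 1)) * Real.exp (lam * t) *
          W t ^ (1 + δ * (p - 1)) ≤ W' t) →
      T ≤ C * Real.log (1 + W₀ ^ (-(p - 1))) := by
  have hσ : 0 < δ * (p - 1) := mul_pos hδ.1 (sub_pos.2 hp)
  set K := lam / (δ * (p - 1) * γ)
  refine ⟨max K 1 / lam, by positivity, fun W₀ T W W' hW₀ hT hW0 hW hpos hineq => ?_⟩
  have hc : 0 < γ * W₀ ^ ((1 - δ) * (p - 1)) := by positivity
  have hlife := le_log_div_of_rpow_blowup hσ hc hlam hT hW hpos hineq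
  have hsplit : W₀ ^ (-(δ * (p - 1))) = W₀ ^ (-(p - 1)) * W₀ ^ ((1 - δ) * (p - 1)) := by
    rw [← rpow_add hW₀]; ring_nf
  have hcoef : lam * W 0 ^ (-(δ * (p - 1))) / (δ * (p - 1) * (γ * W₀ ^ ((1 - δ) * (p - 1))))
      = K * W₀ ^ (-(p - 1)) := by
    rw [hW0, hsplit]; simp only [K]; field_simp
  calc T ≤ log (1 + K * W₀ ^ (-(p - 1))) / lam := by rwa [hcoef] at hlife
    _ ≤ max K 1 * log (1 + W₀ ^ (-(p - 1))) / lam := by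
        gcongr
        exact log_one_add_mul_le_max_mul_log (by positivity) (by positivity)
    _ = max K 1 / lam * log (1 + W₀ ^ (-(p - 1))) := by ring
end

section
/- Let α > 0 and a(t) = (t+1)^{α}. Set A(t) = ∫₀ᵗ a(s) ds = ((t+1)^{α+1} − 1)/(α+1) and fix R > 0, n ≥ 1, p > 1. If W : [0,T) → ℝ is C¹ with W(0) = εc₀ (c₀ > 0), W > 0, and W'(t) ≥ (A(t)+R)^{-n(p-1)} W(t)^p on [0,T), and if n(p-1)(α+1) < 1, then T ≤ C ε^{-(p-1)/(1 − n(p-1)(α+1))} for small ε > 0, with C independent of ε. -/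
open Real Set

/-! Since `A(t) + R ≤ (1/(α+1) + R) (t+1)^(α+1)`, the coefficient of the differential inequality
is at least `c (t+1)^(θ-1)` with `θ = 1 - n(p-1)(α+1) > 0`. Along a solution the quantity
`W^(1-p) + (p-1) (c/θ) (t+1)^θ` is nonincreasing, and `W^(1-p) > 0`, so
`(t+1)^θ ≤ 1 + θ (εc₀)^(1-p) / ((p-1)c)`. For `ε ≤ 1` the `1` is absorbed into `ε^(1-p) ≥ 1`,
so the lifespan is `O(ε^(-(p-1)/θ))`. -/

theorem antitoneOn_rpow_one_sub_add_mul {s : Set ℝ} (hs : Convex ℝ s) {p : ℝ} (hp : 1 ≤ p)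
    {W W' G g : ℝ → ℝ} (hW : ∀ t ∈ s, HasDerivAt W (W' t) t)
    (hG : ∀ t ∈ s, HasDerivAt G (g t) t) (hpos : ∀ t ∈ s, 0 < W t)
    (hode : ∀ t ∈ s, g t * W t ^ p ≤ W' t) :
    AntitoneOn (fun t => W t ^ (1 - p) + (p - 1) * G t) s := by
  have hderiv : ∀ t ∈ s, HasDerivAt (fun t => W t ^ (1 - p) + (p - 1) * G t)
      (W' t * (1 - p) * W t ^ (1 - p - 1) + (p - 1) * g t) t := fun t ht =>
    ((hW t ht).rpow_const (Or.inl (hpos t ht).ne')).add ((hG t ht).const_mul _)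
  refine antitoneOn_of_hasDerivWithinAt_nonpos hs
    (fun t ht => (hderiv t ht).continuousAt.continuousWithinAt)
    (fun t ht => (hderiv t (interior_subset ht)).hasDerivWithinAt) fun t ht => ?_
  replace ht := interior_subset ht
  have hWp : W t ^ p * W t ^ (1 - p - 1) = 1 := by
    rw [← rpow_add (hpos t ht)]; norm_num
  have hg : g t ≤ W' t * W t ^ (1 - p - 1) :=
    calc g t = g t * W t ^ p * W t ^ (1 - p - 1) := by rw [mul_assoc, hWp, mul_one]
      _ ≤ W' t * W t ^ (1 - p - 1) :=
        mul_le_mul_of_nonneg_right (hode t ht) (rpow_nonneg (hpos t ht).le _)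
  nlinarith [mul_le_mul_of_nonneg_left hg (sub_nonneg.2 hp)]

theorem add_one_rpow_le_of_mul_rpow_le_deriv {p θ c T : ℝ} {W W' B : ℝ → ℝ} (hp : 1 < p)
    (hθ : 0 < θ) (hc : 0 < c) (hW : ∀ t ∈ Ico 0 T, HasDerivAt W (W' t) t)
    (hpos : ∀ t ∈ Ico 0 T, 0 < W t) (hode : ∀ t ∈ Ico 0 T, B t * W t ^ p ≤ W' t)
    (hB : ∀ t ∈ Ico 0 T, c * (t + 1) ^ (θ - 1) ≤ B t) :
    ∀ t ∈ Ico 0 T, (t + 1) ^ θ ≤ 1 + θ / ((p - 1) * c) * W 0 ^ (1 - p) := by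
  have hG : ∀ t ∈ Ico 0 T,
      HasDerivAt (fun t => c / θ * (t + 1) ^ θ) (c * (t + 1) ^ (θ - 1)) t := by
    intro t ht
    have h := ((hasDerivAt_rpow_const (p := θ) (Or.inl (by linarith [ht.1]))).comp_add_const
      t 1).const_mul (c / θ)
    exact h.congr_deriv (by field_simp)
  have hmono := antitoneOn_rpow_one_sub_add_mul (convex_Ico 0 T) hp.le hW hG hpos
    fun t ht => (mul_le_mul_of_nonneg_right (hB t ht) (rpow_nonneg (hpos t ht).le _)).trans
      (hode t ht)
  intro t ht
  have h0 : (0 : ℝ) ∈ Ico 0 T := ⟨le_rfl, ht.1.trans_lt ht.2⟩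
  have hdecay := hmono h0 ht ht.1
  simp only [zero_add, one_rpow, mul_one] at hdecay
  have hWt : 0 < W t ^ (1 - p) := rpow_pos_of_pos (hpos t ht) _
  have hkey : (p - 1) * c / θ * ((t + 1) ^ θ - 1) ≤ W 0 ^ (1 - p) := by
    have : (p - 1) * c / θ * ((t + 1) ^ θ - 1) = (p - 1) * (c / θ * (t + 1) ^ θ)
        - (p - 1) * (c / θ) := by ring
    linarith
  have hp1 : 0 < p - 1 := sub_pos.2 hp
  calc (t + 1) ^ θ = 1 + θ / ((p - 1) * c) * ((p - 1) * c / θ * ((t + 1) ^ θ - 1)) := by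
        field_simp; ring
    _ ≤ 1 + θ / ((p - 1) * c) * W 0 ^ (1 - p) := by gcongr

theorem rpow_neg_mul_le_tricomi_coeff {α R k t : ℝ} (hα : 0 < α + 1) (hR : 0 < R)
    (hk : 0 ≤ k) (ht : 0 ≤ t) :
    (1 / (α + 1) + R) ^ (-k) * (t + 1) ^ (-(k * (α + 1)))
      ≤ (((t + 1) ^ (α + 1) - 1) / (α + 1) + R) ^ (-k) := by
  have ht1 : 0 ≤ t + 1 := by linarith
  have hu : 1 ≤ (t + 1) ^ (α + 1) := one_le_rpow (by linarith) hα.le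
  have hA : 0 ≤ ((t + 1) ^ (α + 1) - 1) / (α + 1) := div_nonneg (by linarith) hα.le
  have hle : ((t + 1) ^ (α + 1) - 1) / (α + 1) + R ≤ (1 / (α + 1) + R) * (t + 1) ^ (α + 1) := by
    have h1 : ((t + 1) ^ (α + 1) - 1) / (α + 1) ≤ (t + 1) ^ (α + 1) / (α + 1) := by
      gcongr; linarith
    calc _ ≤ (t + 1) ^ (α + 1) / (α + 1) + R * (t + 1) ^ (α + 1) := by
          linarith [le_mul_of_one_le_right hR.le hu]
      _ = _ := by ring
  calc (1 / (α + 1) + R) ^ (-k) * (t + 1) ^ (-(k * (α + 1)))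
      = ((1 / (α + 1) + R) * (t + 1) ^ (α + 1)) ^ (-k) := by
        rw [mul_rpow (by positivity) (by positivity), ← rpow_mul ht1]; ring_nf
    _ ≤ _ := rpow_le_rpow_of_nonpos (by linarith) hle (neg_nonpos.2 hk)

theorem stmt15_general (α R p c₀ : ℝ) (n : ℕ) (hα : 0 < α) (hR : 0 < R)
    (hp : 1 < p) (hc₀ : 0 < c₀) (hcrit : (n : ℝ) * (p - 1) * (α + 1) < 1) :
    ∃ C > (0:ℝ), ∃ ε₀ > (0:ℝ), ∀ ε : ℝ, 0 < ε → ε ≤ ε₀ →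
      ∀ (T : ℝ) (W W' : ℝ → ℝ), 0 < T →
        W 0 = ε * c₀ →
        (∀ t ∈ Set.Ico (0:ℝ) T, HasDerivAt W (W' t) t) →
        (∀ t ∈ Set.Ico (0:ℝ) T, 0 < W t) →
        (∀ t ∈ Set.Ico (0:ℝ) T,
          (((t + 1) ^ (α + 1) - 1) / (α + 1) + R) ^ (-((n : ℝ) * (p - 1)))
            * W t ^ p ≤ W' t) →
        T ≤ C * ε ^ (-(p - 1) / (1 - (n : ℝ) * (p - 1) * (α + 1))) := by
  set k := (n : ℝ) * (p - 1)
  set θ := 1 - k * (α + 1)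
  set c := (1 / (α + 1) + R) ^ (-k)
  set D := θ / ((p - 1) * c) * c₀ ^ (1 - p)
  have hθ : 0 < θ := by linarith
  have hc : 0 < c := by positivity
  have hD : 0 < D := by have := sub_pos.2 hp; positivity
  refine ⟨(1 + D) ^ θ⁻¹, by positivity, 1, one_pos, ?_⟩
  intro ε hε hε₁ T W W' hT hW0 hW hpos hode
  have hbound := add_one_rpow_le_of_mul_rpow_le_deriv hp hθ hc hW hpos hode fun t ht => by
    have hk : 0 ≤ k := by have := sub_pos.2 hp; positivity
    convert rpow_neg_mul_le_tricomi_coeff (α := α) (by linarith) hR hk ht.1 using 3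
    ring
  have hεp : 1 ≤ ε ^ (1 - p) := one_le_rpow_of_pos_of_le_one_of_nonpos hε hε₁ (by linarith)
  refine (isLUB_Ico hT).2 fun t ht => ?_
  have ht' : (t + 1) ^ θ ≤ (1 + D) * ε ^ (1 - p) := by
    have := hbound t ht
    rw [hW0, mul_rpow hε.le hc₀.le] at this
    nlinarith
  calc t ≤ t + 1 := by linarith
    _ ≤ ((1 + D) * ε ^ (1 - p)) ^ θ⁻¹ :=
      (le_rpow_inv_iff_of_pos (by linarith [ht.1]) (by positivity) hθ).2 ht'
    _ = (1 + D) ^ θ⁻¹ * ε ^ (-(p - 1) / θ) := by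
      rw [mul_rpow (by linarith) (by positivity), ← rpow_mul hε.le]
      ring_nf

/-- Lifespan upper bound in the generalized Tricomi case `a(t) = (t+1)^α`:
if `W' ≥ (A(t)+R)^{-n(p-1)} W^p` with `A(t) = ((t+1)^{α+1}-1)/(α+1)`,
`W(0) = εc₀` and `n(p-1)(α+1) < 1`, then
`T ≤ C ε^{-(p-1)/(1-n(p-1)(α+1))}` for small `ε`. -/
theorem stmt15 (α R p c₀ : ℝ) (n : ℕ) (hα : 0 < α) (hR : 0 < R) (hn : 1 ≤ n)
    (hp : 1 < p) (hc₀ : 0 < c₀) (hcrit : (n : ℝ) * (p - 1) * (α + 1) < 1) :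
    ∃ C > (0:ℝ), ∃ ε₀ > (0:ℝ), ∀ ε : ℝ, 0 < ε → ε ≤ ε₀ →
      ∀ (T : ℝ) (W W' : ℝ → ℝ), 0 < T →
        W 0 = ε * c₀ →
        (∀ t ∈ Set.Ico (0:ℝ) T, HasDerivAt W (W' t) t) →
        (∀ t ∈ Set.Ico (0:ℝ) T, 0 < W t) →
        (∀ t ∈ Set.Ico (0:ℝ) T,
          (((t + 1) ^ (α + 1) - 1) / (α + 1) + R) ^ (-((n : ℝ) * (p - 1)))
            * W t ^ p ≤ W' t) →
        T ≤ C * ε ^ (-(p - 1) / (1 - (n : ℝ) * (p - 1) * (α + 1))) :=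
  stmt15_general α R p c₀ n hα hR hp hc₀ hcrit
end
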